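/- Let S be a finite nonempty set, c a cost function, and {i,j,k} ∈ binom(S,3). If c_{ij} + c_{ik} ≤ 0, c_{ij} + c_{jk} ≤ 0, c_{ik} + c_{jk} ≤ 0, c_{ij} + c_{ik} + c_{jk} ≤ 0, c_{ij} + c_{ik} + c_{jk} + (1/2)·c_{ijk} ≤ 0, c_{ij} + c_{ik} + c_{ijk} ≤ Σ_{{p,q}∈δ({i,j,k})∩P^−} c_{pq} + Σ_{{p,q,r}∈T_{δ({i,j,k})}∩T^−} c_{pqr}, and c_{jk} + c_{ik} + c_{ijk} ≤ Σ_{{p,q}∈δ({i,j,k})∩P^−} c_{pq} + Σ_{{p,q,r}∈T_{δ({i,j,k})}∩T^−} c_{pqr}, then there exists an optimal solution x* of min_{x∈X_S} φ_c(x) such that x*_{ik} = 1. -/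
import Mathlib


open Finset

/-- `binom(S,2)`: the set of 2-element subsets (unordered pairs) of the ground set. -/
def pairs (V : Type*) [Fintype V] [DecidableEq V] : Finset (Finset V) :=
  (univ : Finset V).powersetCard 2

/-- `binom(S,3)`: the set of 3-element subsets (unordered triples) of the ground set. -/
def triples (V : Type*) [Fintype V] [DecidableEq V] : Finset (Finset V) :=
  (univ : Finset V).powersetCard 3

/-- The feasible set `X_S`: maps `x : binom(S,2) → {0,1}` satisfying the triangle
inequalities `x_{pq} + x_{qr} - x_{pr} ≤ 1` for all pairwise distinct `p, q, r`. -/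
def feasible {V : Type*} [Fintype V] [DecidableEq V] (x : Finset V → ℝ) : Prop :=
  (∀ e ∈ pairs V, x e = 0 ∨ x e = 1) ∧
    ∀ p q r : V, p ≠ q → q ≠ r → p ≠ r →
      x {p, q} + x {q, r} - x {p, r} ≤ 1

/-- The cubic objective
`φ_c(x) = Σ_{{p,q,r}} c_{pqr} x_{pq} x_{pr} x_{qr} + Σ_{{p,q}} c_{pq} x_{pq} + c_∅`. -/
def obj {V : Type*} [Fintype V] [DecidableEq V] (c x : Finset V → ℝ) : ℝ :=
  ∑ t ∈ triples V, c t * ∏ e ∈ t.powersetCard 2, x e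
    + ∑ e ∈ pairs V, c e * x e + c ∅

/-- `δ(R)`: the pairs having exactly one element in `R`. -/
def cut {V : Type*} [Fintype V] [DecidableEq V] (R : Finset V) : Finset (Finset V) :=
  (pairs V).filter fun e => (e ∩ R).card = 1

/-- `T_{P'}`: the triples having some 2-element subset in `P'`. -/
def Tof {V : Type*} [Fintype V] [DecidableEq V] (P' : Finset (Finset V)) :
    Finset (Finset V) :=
  (triples V).filter fun t => ∃ e ∈ t.powersetCard 2, e ∈ P'

set_option linter.unusedSectionVars false
set_option linter.unusedVariables false

section Aux
variable {V : Type*} [Fintype V] [DecidableEq V]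

lemma mem_pairs {e : Finset V} : e ∈ pairs V ↔ e.card = 2 := by
  simp [pairs, Finset.mem_powersetCard, Finset.subset_univ]

lemma mem_triples {t : Finset V} : t ∈ triples V ↔ t.card = 3 := by
  simp [triples, Finset.mem_powersetCard, Finset.subset_univ]

lemma pair_mem_pairs {p q : V} (h : p ≠ q) : ({p, q} : Finset V) ∈ pairs V :=
  mem_pairs.mpr (Finset.card_pair h)

lemma pair_enum {i j k : V} (hij : i ≠ j) (hik : i ≠ k)
    (hjk : j ≠ k) {e : Finset V} (hs : e ⊆ {i, j, k}) (hc : e.card = 2) :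
    e = {i, j} ∨ e = {i, k} ∨ e = {j, k} := by
  obtain ⟨a, b, hab, rfl⟩ := Finset.card_eq_two.mp hc
  have ha := hs (Finset.mem_insert_self a {b})
  have hb := hs (Finset.mem_insert_of_mem (Finset.mem_singleton_self b))
  simp only [Finset.mem_insert, Finset.mem_singleton] at ha hb
  rcases ha with rfl|rfl|rfl <;> rcases hb with rfl|rfl|rfl <;>
    simp_all [Finset.pair_comm]

lemma obj_congr {c x y : Finset V → ℝ} (h : ∀ e ∈ pairs V, x e = y e) :
    obj c x = obj c y := by
  unfold obj
  have e1 : ∑ t ∈ triples V, c t * ∏ e ∈ t.powersetCard 2, x e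
      = ∑ t ∈ triples V, c t * ∏ e ∈ t.powersetCard 2, y e := by
    refine Finset.sum_congr rfl fun t _ => ?_
    congr 1
    refine Finset.prod_congr rfl fun e he => ?_
    exact h e (mem_pairs.mpr (Finset.mem_powersetCard.mp he).2)
  have e2 : ∑ e ∈ pairs V, c e * x e = ∑ e ∈ pairs V, c e * y e :=
    Finset.sum_congr rfl fun e he => by rw [h e he]
  rw [e1, e2]

/-- The key modification step: given feasible `x` with `x {i,k} = 0`,
produce a feasible `x'` with `x' {i,k} = 1` and no larger objective. -/
lemma key_step (c x : Finset V → ℝ) (i j k : V)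
    (hij : i ≠ j) (hik : i ≠ k) (hjk : j ≠ k)
    (h2 : c {i, j} + c {j, k} ≤ 0)
    (h6 : c {i, j} + c {i, k} + c {i, j, k} ≤
        ∑ e ∈ (cut {i, j, k}).filter (fun e => c e < 0), c e
          + ∑ t ∈ (Tof (cut {i, j, k})).filter (fun t => c t < 0), c t)
    (h7 : c {j, k} + c {i, k} + c {i, j, k} ≤
        ∑ e ∈ (cut {i, j, k}).filter (fun e => c e < 0), c e
          + ∑ t ∈ (Tof (cut {i, j, k})).filter (fun t => c t < 0), c t)
    (hx : feasible x) (hx0 : x {i, k} = 0) :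
    ∃ x' : Finset V → ℝ, feasible x' ∧ obj c x' ≤ obj c x ∧ x' {i, k} = 1 := by
  classical
  set S3 : Finset V := {i, j, k} with hS3def
  set x' : Finset V → ℝ :=
    fun e => if e ∩ S3 = ∅ then x e else if e ⊆ S3 then 1 else 0 with hx'def
  have hS3card : S3.card = 3 := Finset.card_eq_three.mpr ⟨i, j, k, hij, hik, hjk, rfl⟩
  have hS3t : S3 ∈ triples V := mem_triples.mpr hS3card
  -- membership facts
  have hiS3 : i ∈ S3 := by simp [hS3def]
  have hjS3 : j ∈ S3 := by simp [hS3def]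
  have hkS3 : k ∈ S3 := by simp [hS3def]
  -- basic facts about x'
  have hx'eq1 : ∀ e : Finset V, e.Nonempty → e ⊆ S3 → x' e = 1 := by
    intro e he hsub
    have : e ∩ S3 = e := Finset.inter_eq_left.mpr hsub
    rw [hx'def]
    simp only [this]
    rw [if_neg (Finset.nonempty_iff_ne_empty.mp he), if_pos hsub]
  have hx'cut0 : ∀ e ∈ cut S3, x' e = 0 := by
    intro e he
    obtain ⟨hep, hc1⟩ := Finset.mem_filter.mp he
    have he2 : e.card = 2 := mem_pairs.mp hep
    have hne : e ∩ S3 ≠ ∅ := by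
      intro h; rw [h] at hc1; simp at hc1
    have hnsub : ¬ e ⊆ S3 := by
      intro h
      rw [Finset.inter_eq_left.mpr h, he2] at hc1
      omega
    rw [hx'def]; simp only
    rw [if_neg hne, if_neg hnsub]
  have hx'out : ∀ e : Finset V, e ∩ S3 = ∅ → x' e = x e := by
    intro e he; rw [hx'def]; simp [he]
  -- feasibility of x'
  have hx'01 : ∀ a b : V, a ≠ b → x' {a, b} = 0 ∨ x' {a, b} = 1 := by
    intro a b hab
    rw [hx'def]; simp only
    split_ifs with h h'
    · exact hx.1 _ (pair_mem_pairs hab)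
    · right; rfl
    · left; rfl
  have hx'char : ∀ a b : V, x' {a, b} = 1 →
      (({a, b} : Finset V) ∩ S3 = ∅ ∧ x {a, b} = 1) ∨ ({a, b} : Finset V) ⊆ S3 := by
    intro a b h
    rw [hx'def] at h; simp only at h
    split_ifs at h with h1 h2
    · exact Or.inl ⟨h1, h⟩
    · exact Or.inr h2
    · norm_num at h
  have hxtrans : ∀ p q r : V, p ≠ q → q ≠ r → p ≠ r →
      x {p, q} = 1 → x {q, r} = 1 → x {p, r} = 1 := by
    intro p q r hpq hqr hpr h1 h2
    have := hx.2 p q r hpq hqr hpr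
    rcases hx.1 {p, r} (pair_mem_pairs hpr) with h|h
    · rw [h1, h2, h] at this; norm_num at this
    · exact h
  have hnotin : ∀ a : V, ∀ s : Finset V, ({a} : Finset V) ∩ S3 = ∅ → False ∨ True := by
    intro _ _ _; exact Or.inr trivial
  have hdisj_mem : ∀ (a b : V), ({a, b} : Finset V) ∩ S3 = ∅ → a ∉ S3 ∧ b ∉ S3 := by
    intro a b h
    constructor
    · intro ha
      have : a ∈ ({a, b} : Finset V) ∩ S3 := Finset.mem_inter.mpr ⟨by simp, ha⟩
      rw [h] at this; simp at this
    · intro hb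
      have : b ∈ ({a, b} : Finset V) ∩ S3 := Finset.mem_inter.mpr ⟨by simp, hb⟩
      rw [h] at this; simp at this
  have hx'trans : ∀ p q r : V, p ≠ q → q ≠ r → p ≠ r →
      x' {p, q} = 1 → x' {q, r} = 1 → x' {p, r} = 1 := by
    intro p q r hpq hqr hpr h1 h2
    rcases hx'char p q h1 with ⟨hd1, hv1⟩|hs1
    · rcases hx'char q r h2 with ⟨hd2, hv2⟩|hs2
      · -- both outside
        have hp := (hdisj_mem p q hd1).1
        have hr := (hdisj_mem q r hd2).2
        have hxpr : x {p, r} = 1 := hxtrans p q r hpq hqr hpr hv1 hv2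
        have hd : ({p, r} : Finset V) ∩ S3 = ∅ := by
          rw [Finset.eq_empty_iff_forall_notMem]
          intro a ha
          obtain ⟨ha1, ha2⟩ := Finset.mem_inter.mp ha
          simp only [Finset.mem_insert, Finset.mem_singleton] at ha1
          rcases ha1 with rfl|rfl
          · exact hp ha2
          · exact hr ha2
        rw [hx'out _ hd]; exact hxpr
      · exfalso
        have : q ∈ S3 := hs2 (by simp)
        exact (hdisj_mem p q hd1).2 this
    · rcases hx'char q r h2 with ⟨hd2, hv2⟩|hs2
      · exfalso
        have : q ∈ S3 := hs1 (by simp)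
        exact (hdisj_mem q r hd2).1 this
      · have hp : p ∈ S3 := hs1 (by simp)
        have hr : r ∈ S3 := hs2 (by simp)
        exact hx'eq1 _ ⟨p, by simp⟩ (by
          intro a ha
          simp only [Finset.mem_insert, Finset.mem_singleton] at ha
          rcases ha with rfl|rfl
          · exact hp
          · exact hr)
  have hx'feas : feasible x' := by
    constructor
    · intro e he
      rw [hx'def]; simp only
      split_ifs with h h'
      · exact hx.1 e he
      · right; rfl
      · left; rfl
    · intro p q r hpq hqr hpr
      rcases hx'01 p q hpq with h1|h1 <;> rcases hx'01 q r hqr with h2|h2 <;>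
        rcases hx'01 p r hpr with h3|h3
      all_goals try linarith
      have := hx'trans p q r hpq hqr hpr h1 h2
      linarith
  -- x' {i,k} = 1
  have hx'ik : x' {i, k} = 1 := by
    refine hx'eq1 _ ⟨i, by simp⟩ ?_
    intro a ha
    simp only [Finset.mem_insert, Finset.mem_singleton] at ha
    rcases ha with rfl|rfl
    · exact hiS3
    · exact hkS3
  refine ⟨x', hx'feas, ?_, hx'ik⟩
  -- Now the objective comparison.
  set Tδ : Finset (Finset V) := Tof (cut S3) with hTδdef
  set I3 : Finset (Finset V) := ({{i, j}, {i, k}, {j, k}} : Finset (Finset V)) with hI3def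
  have hS3nT : S3 ∉ Tδ := by
    intro h
    obtain ⟨-, e, he, hc⟩ := Finset.mem_filter.mp h
    obtain ⟨hsub, hc2⟩ := Finset.mem_powersetCard.mp he
    have := (Finset.mem_filter.mp hc).2
    rw [Finset.inter_eq_left.mpr hsub, hc2] at this
    omega
  have hTδsub : ∀ t, t ∈ Tδ → t ∈ triples V := fun t ht => (Finset.mem_filter.mp ht).1
  have hP'T0 : ∀ t ∈ Tδ, ∏ e ∈ t.powersetCard 2, x' e = 0 := by
    intro t ht
    obtain ⟨-, e, he, hc⟩ := Finset.mem_filter.mp ht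
    exact Finset.prod_eq_zero he (hx'cut0 e hc)
  have hsame : ∀ t ∈ triples V, t ∉ Tδ → t ≠ S3 → ∀ e ∈ t.powersetCard 2, x' e = x e := by
    intro t ht hnT hne e he
    obtain ⟨hesub, hec⟩ := Finset.mem_powersetCard.mp he
    by_cases hd : e ∩ S3 = ∅
    · exact hx'out e hd
    exfalso
    have hle : (e ∩ S3).card ≤ 2 := le_trans (Finset.card_le_card Finset.inter_subset_left) hec.le
    have hpos : (e ∩ S3).card ≠ 0 := fun h => hd (Finset.card_eq_zero.mp h)
    by_cases h1 : (e ∩ S3).card = 1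
    · have hce : e ∈ cut S3 := Finset.mem_filter.mpr ⟨mem_pairs.mpr hec, h1⟩
      exact hnT (Finset.mem_filter.mpr ⟨ht, ⟨e, he, hce⟩⟩)
    · have h2' : (e ∩ S3).card = 2 := by omega
      have hesub3 : e ⊆ S3 :=
        Finset.inter_eq_left.mp
          (Finset.eq_of_subset_of_card_le Finset.inter_subset_left (by omega))
      have htc : t.card = 3 := mem_triples.mp ht
      have hts : e ⊆ t ∩ S3 := Finset.subset_inter hesub hesub3
      have h2le : 2 ≤ (t ∩ S3).card := hec ▸ Finset.card_le_card hts
      have hlt : (t ∩ S3).card ≤ 3 :=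
        le_trans (Finset.card_le_card Finset.inter_subset_left) htc.le
      have hne3 : (t ∩ S3).card ≠ 3 := by
        intro h3
        have ha : t ∩ S3 = t :=
          Finset.eq_of_subset_of_card_le Finset.inter_subset_left (by omega)
        have hb : t ⊆ S3 := Finset.inter_eq_left.mp ha
        exact hne (Finset.eq_of_subset_of_card_le hb (by omega))
      obtain ⟨u, hu⟩ := Finset.card_pos.mp (show 0 < e.card by omega)
      have hvne : (t \ S3).Nonempty := by
        rw [← Finset.card_pos]
        have := Finset.card_inter_add_card_sdiff t S3
        omega
      obtain ⟨v, hv⟩ := hvne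
      have hvt : v ∈ t := (Finset.mem_sdiff.mp hv).1
      have hvS : v ∉ S3 := (Finset.mem_sdiff.mp hv).2
      have huS : u ∈ S3 := hesub3 hu
      have hut : u ∈ t := hesub hu
      have huv : u ≠ v := fun h => hvS (h ▸ huS)
      have hpair : ({u, v} : Finset V) ∈ t.powersetCard 2 := by
        rw [Finset.mem_powersetCard]
        refine ⟨?_, Finset.card_pair huv⟩
        intro a ha
        simp only [Finset.mem_insert, Finset.mem_singleton] at ha
        rcases ha with rfl|rfl
        · exact hut
        · exact hvt
      have hcutuv : ({u, v} : Finset V) ∈ cut S3 := by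
        refine Finset.mem_filter.mpr ⟨pair_mem_pairs huv, ?_⟩
        have : ({u, v} : Finset V) ∩ S3 = {u} := by
          ext a
          simp only [Finset.mem_inter, Finset.mem_insert, Finset.mem_singleton]
          constructor
          · rintro ⟨rfl|rfl, h⟩
            · rfl
            · exact absurd h hvS
          · rintro rfl; exact ⟨Or.inl rfl, huS⟩
        rw [this]; simp
      exact hnT (Finset.mem_filter.mpr ⟨ht, ⟨{u, v}, hpair, hcutuv⟩⟩)
  have hP'S3 : ∏ e ∈ S3.powersetCard 2, x' e = 1 := by
    refine Finset.prod_eq_one fun e he => ?_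
    obtain ⟨hs, hc⟩ := Finset.mem_powersetCard.mp he
    exact hx'eq1 e (Finset.card_pos.mp (by omega)) hs
  have hikmem : ({i, k} : Finset V) ∈ S3.powersetCard 2 := by
    rw [Finset.mem_powersetCard]
    refine ⟨?_, Finset.card_pair hik⟩
    intro a ha
    simp only [Finset.mem_insert, Finset.mem_singleton] at ha
    rcases ha with rfl|rfl
    · exact hiS3
    · exact hkS3
  have hPS3 : ∏ e ∈ S3.powersetCard 2, x e = 0 := Finset.prod_eq_zero hikmem hx0
  have hx01 : ∀ e ∈ pairs V, 0 ≤ x e ∧ x e ≤ 1 := by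
    intro e he
    rcases hx.1 e he with h|h <;> rw [h] <;> norm_num
  have hPbounds : ∀ t ∈ triples V,
      0 ≤ ∏ e ∈ t.powersetCard 2, x e ∧ ∏ e ∈ t.powersetCard 2, x e ≤ 1 := by
    intro t ht
    have hf : ∀ e ∈ t.powersetCard 2, 0 ≤ x e ∧ x e ≤ 1 := fun e he =>
      hx01 e (mem_pairs.mpr (Finset.mem_powersetCard.mp he).2)
    exact ⟨Finset.prod_nonneg fun e he => (hf e he).1,
      Finset.prod_le_one (fun e he => (hf e he).1) fun e he => (hf e he).2⟩
  -- pointwise bound on triples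
  have hTb : ∀ t ∈ triples V,
      c t * ∏ e ∈ t.powersetCard 2, x' e - c t * ∏ e ∈ t.powersetCard 2, x e ≤
        (if t = S3 then c t else 0) + (if t ∈ Tδ ∧ c t < 0 then -c t else 0) := by
    intro t ht
    by_cases h1 : t = S3
    · subst h1
      rw [if_pos rfl, if_neg (fun h => hS3nT h.1), hP'S3, hPS3]
      ring_nf
      try exact le_refl _
    · rw [if_neg h1]
      obtain ⟨hP0, hP1⟩ := hPbounds t ht
      by_cases hT : t ∈ Tδ
      · rw [hP'T0 t hT]
        by_cases hc : c t < 0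
        · rw [if_pos ⟨hT, hc⟩]
          nlinarith [hP1, hP0]
        · rw [if_neg fun h => hc h.2]
          push_neg at hc
          nlinarith [hP0]
      · rw [if_neg fun h => hT h.1,
          Finset.prod_congr rfl (hsame t ht hT h1)]
        simp
  -- facts about I3
  have hI3facts : ∀ e ∈ I3, e ⊆ S3 ∧ e.card = 2 := by
    intro e he
    simp only [hI3def, Finset.mem_insert, Finset.mem_singleton] at he
    have sub : ∀ a b : V, a ∈ S3 → b ∈ S3 → ({a, b} : Finset V) ⊆ S3 := by
      intro a b ha hb z hz
      simp only [Finset.mem_insert, Finset.mem_singleton] at hz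
      rcases hz with rfl|rfl
      · exact ha
      · exact hb
    rcases he with rfl|rfl|rfl
    · exact ⟨sub i j hiS3 hjS3, Finset.card_pair hij⟩
    · exact ⟨sub i k hiS3 hkS3, Finset.card_pair hik⟩
    · exact ⟨sub j k hjS3 hkS3, Finset.card_pair hjk⟩
  -- pointwise bound on pairs
  have hPb : ∀ e ∈ pairs V, c e * x' e - c e * x e ≤
      (if e ∈ I3 then c e * (1 - x e) else 0) +
        (if e ∈ cut S3 ∧ c e < 0 then -c e else 0) := by
    intro e he
    by_cases hI : e ∈ I3
    · obtain ⟨hsub, hc2⟩ := hI3facts e hI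
      have h1 : x' e = 1 := hx'eq1 e (Finset.card_pos.mp (by omega)) hsub
      have hnc : e ∉ cut S3 := by
        intro h
        have := (Finset.mem_filter.mp h).2
        rw [Finset.inter_eq_left.mpr hsub, hc2] at this
        omega
      rw [if_pos hI, if_neg fun h => hnc h.1, h1]
      ring_nf
      linarith [le_refl (c e)]
    · rw [if_neg hI]
      by_cases hcut : e ∈ cut S3
      · have h0 : x' e = 0 := hx'cut0 e hcut
        obtain ⟨ha, hb⟩ := hx01 e he
        rw [h0]
        by_cases hc : c e < 0
        · rw [if_pos ⟨hcut, hc⟩]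
          nlinarith
        · rw [if_neg fun h => hc h.2]
          push_neg at hc
          nlinarith
      · rw [if_neg fun h => hcut h.1]
        have hc2 : e.card = 2 := mem_pairs.mp he
        have hd : e ∩ S3 = ∅ := by
          by_contra hne
          have hle : (e ∩ S3).card ≤ 2 :=
            le_trans (Finset.card_le_card Finset.inter_subset_left) hc2.le
          have hnz : (e ∩ S3).card ≠ 0 := fun h => hne (Finset.card_eq_zero.mp h)
          have hn1 : (e ∩ S3).card ≠ 1 := fun h => hcut (Finset.mem_filter.mpr ⟨he, h⟩)
          have hsub : e ⊆ S3 :=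
            Finset.inter_eq_left.mp
              (Finset.eq_of_subset_of_card_le Finset.inter_subset_left (by omega))
          rcases pair_enum hij hik hjk hsub hc2 with h|h|h <;>
            exact hI (by simp [hI3def, h])
        rw [hx'out e hd]
        simp
  -- summing the bounds
  have hsumT : ∑ t ∈ triples V,
      ((if t = S3 then c t else 0) + (if t ∈ Tδ ∧ c t < 0 then -c t else 0)) =
        c S3 - ∑ t ∈ Tδ.filter (fun t => c t < 0), c t := by
    rw [Finset.sum_add_distrib]
    have e1 : ∑ t ∈ triples V, (if t = S3 then c t else 0) = c S3 := by
      rw [Finset.sum_ite_eq' (triples V) S3 c, if_pos hS3t]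
    have hfe : (triples V).filter (fun t => t ∈ Tδ ∧ c t < 0) =
        Tδ.filter (fun t => c t < 0) := by
      ext t
      simp only [Finset.mem_filter]
      constructor
      · rintro ⟨-, h, h'⟩; exact ⟨h, h'⟩
      · rintro ⟨h, h'⟩; exact ⟨hTδsub t h, h, h'⟩
    have e2 : ∑ t ∈ triples V, (if t ∈ Tδ ∧ c t < 0 then -c t else 0) =
        ∑ t ∈ Tδ.filter (fun t => c t < 0), -c t := by
      rw [← Finset.sum_filter, hfe]
    rw [e1, e2, Finset.sum_neg_distrib]
    ring
  have ne1 : ({i, j} : Finset V) ≠ {i, k} := by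
    intro h
    have : (j : V) ∈ ({i, k} : Finset V) := by rw [← h]; simp
    simp only [Finset.mem_insert, Finset.mem_singleton] at this
    rcases this with h'|h'
    · exact hij h'.symm
    · exact hjk h'
  have ne2 : ({i, j} : Finset V) ≠ {j, k} := by
    intro h
    have : (i : V) ∈ ({j, k} : Finset V) := by rw [← h]; simp
    simp only [Finset.mem_insert, Finset.mem_singleton] at this
    rcases this with h'|h'
    · exact hij h'
    · exact hik h'
  have ne3 : ({i, k} : Finset V) ≠ {j, k} := by
    intro h
    have : (i : V) ∈ ({j, k} : Finset V) := by rw [← h]; simp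
    simp only [Finset.mem_insert, Finset.mem_singleton] at this
    rcases this with h'|h'
    · exact hij h'
    · exact hik h'
  have hsumP : ∑ e ∈ pairs V,
      ((if e ∈ I3 then c e * (1 - x e) else 0) +
        (if e ∈ cut S3 ∧ c e < 0 then -c e else 0)) =
      (c {i, j} * (1 - x {i, j}) + c {i, k} * (1 - x {i, k}) + c {j, k} * (1 - x {j, k}))
        - ∑ e ∈ (cut S3).filter (fun e => c e < 0), c e := by
    rw [Finset.sum_add_distrib]
    have hI3p : I3 ⊆ pairs V := fun e he => mem_pairs.mpr (hI3facts e he).2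
    have e1 : ∑ e ∈ pairs V, (if e ∈ I3 then c e * (1 - x e) else 0) =
        ∑ e ∈ I3, c e * (1 - x e) := by
      rw [← Finset.sum_filter, Finset.filter_mem_eq_inter, Finset.inter_eq_right.mpr hI3p]
    have hcutp : ∀ e, e ∈ cut S3 → e ∈ pairs V := fun e he => (Finset.mem_filter.mp he).1
    have hfe : (pairs V).filter (fun e => e ∈ cut S3 ∧ c e < 0) =
        (cut S3).filter (fun e => c e < 0) := by
      ext e
      simp only [Finset.mem_filter]
      constructor
      · rintro ⟨-, h, h'⟩; exact ⟨h, h'⟩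
      · rintro ⟨h, h'⟩; exact ⟨hcutp e h, h, h'⟩
    have e2 : ∑ e ∈ pairs V, (if e ∈ cut S3 ∧ c e < 0 then -c e else 0) =
        ∑ e ∈ (cut S3).filter (fun e => c e < 0), -c e := by
      rw [← Finset.sum_filter, hfe]
    have e3 : ∑ e ∈ I3, c e * (1 - x e) =
        c {i, j} * (1 - x {i, j}) + c {i, k} * (1 - x {i, k}) + c {j, k} * (1 - x {j, k}) := by
      rw [hI3def]
      rw [Finset.sum_insert (by simp [ne1, ne2]), Finset.sum_insert (by simp [ne3]),
        Finset.sum_singleton]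
      ring
    rw [e1, e2, e3, Finset.sum_neg_distrib]
    ring
  -- combine everything
  have hdiff : obj c x' - obj c x =
      (∑ t ∈ triples V,
        (c t * ∏ e ∈ t.powersetCard 2, x' e - c t * ∏ e ∈ t.powersetCard 2, x e))
      + (∑ e ∈ pairs V, (c e * x' e - c e * x e)) := by
    unfold obj
    rw [Finset.sum_sub_distrib, Finset.sum_sub_distrib]
    ring
  have hb1 := Finset.sum_le_sum hTb
  have hb2 := Finset.sum_le_sum hPb
  have key : obj c x' - obj c x ≤
      c S3 - ∑ t ∈ Tδ.filter (fun t => c t < 0), c t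
      + (c {i, j} * (1 - x {i, j}) + c {i, k} * (1 - x {i, k}) + c {j, k} * (1 - x {j, k}))
      - ∑ e ∈ (cut S3).filter (fun e => c e < 0), c e := by
    rw [hdiff]
    linarith [hb1, hb2, hsumT.le, hsumT.ge, hsumP.le, hsumP.ge]
  rcases hx.1 {i, j} (pair_mem_pairs hij) with ha|ha <;>
    rcases hx.1 {j, k} (pair_mem_pairs hjk) with hb|hb
  · -- x_ij = 0, x_jk = 0
    rw [ha, hb, hx0] at key
    norm_num at key
    linarith [key, h2, h6, h7]
  · -- x_ij = 0, x_jk = 1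
    rw [ha, hb, hx0] at key
    norm_num at key
    linarith [key, h6]
  · -- x_ij = 1, x_jk = 0
    rw [ha, hb, hx0] at key
    norm_num at key
    linarith [key, h7]
  · -- x_ij = 1, x_jk = 1 : contradiction with triangle inequality
    have := hx.2 i j k hij hjk hik
    rw [ha, hb, hx0] at this
    norm_num at this

end Aux

/--
Let `S` be a finite nonempty set, `c` a cost function, and
`{i,j,k} ∈ binom(S,3)`.  If the seven listed inequalities hold, then there exists an
optimal solution `x*` of `min_{x ∈ X_S} φ_c(x)` with `x*_{ik} = 1`.
-/
theorem triplet_subgraph_join_persistency {V : Type*} [Fintype V] [DecidableEq V] [Nonempty V]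
    (c : Finset V → ℝ) (i j k : V) (hij : i ≠ j) (hik : i ≠ k) (hjk : j ≠ k)
    (h1 : c {i, j} + c {i, k} ≤ 0)
    (h2 : c {i, j} + c {j, k} ≤ 0)
    (h3 : c {i, k} + c {j, k} ≤ 0)
    (h4 : c {i, j} + c {i, k} + c {j, k} ≤ 0)
    (h5 : c {i, j} + c {i, k} + c {j, k} + (1 / 2) * c {i, j, k} ≤ 0)
    (h6 : c {i, j} + c {i, k} + c {i, j, k} ≤
        ∑ e ∈ (cut {i, j, k}).filter (fun e => c e < 0), c e
          + ∑ t ∈ (Tof (cut {i, j, k})).filter (fun t => c t < 0), c t)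
    (h7 : c {j, k} + c {i, k} + c {i, j, k} ≤
        ∑ e ∈ (cut {i, j, k}).filter (fun e => c e < 0), c e
          + ∑ t ∈ (Tof (cut {i, j, k})).filter (fun t => c t < 0), c t) :
    ∃ xstar : Finset V → ℝ, feasible xstar ∧
      (∀ x : Finset V → ℝ, feasible x → obj c xstar ≤ obj c x) ∧
      xstar {i, k} = 1 := by
  classical
  -- indicator function of a set of pairs
  set ind : Finset (Finset V) → (Finset V → ℝ) :=
    fun A e => if e ∈ A then 1 else 0 with hinddef
  have hind01 : ∀ A e, ind A e = 0 ∨ ind A e = 1 := by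
    intro A e
    rw [hinddef]
    by_cases h : e ∈ A
    · right; simp [h]
    · left; simp [h]
  have hfeas0 : feasible (ind ∅) := by
    constructor
    · intro e _; exact hind01 ∅ e
    · intro p q r _ _ _
      rw [hinddef]
      simp
  obtain ⟨A0, hA0F, hmin⟩ := Finset.exists_min_image
    (((pairs V).powerset).filter fun A => feasible (ind A))
    (fun A => obj c (ind A))
    ⟨∅, Finset.mem_filter.mpr ⟨Finset.mem_powerset.mpr (Finset.empty_subset _), hfeas0⟩⟩
  have hA0feas : feasible (ind A0) := (Finset.mem_filter.mp hA0F).2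
  -- optimality of ind A0 among all feasible solutions
  have hopt : ∀ y : Finset V → ℝ, feasible y → obj c (ind A0) ≤ obj c y := by
    intro y hy
    set B : Finset (Finset V) := (pairs V).filter fun e => y e = 1 with hBdef
    have heq : ∀ e ∈ pairs V, ind B e = y e := by
      intro e he
      rcases hy.1 e he with h0|h1
      · have : e ∉ B := by
          rw [hBdef]
          simp only [Finset.mem_filter, not_and]
          intro _
          rw [h0]; norm_num
        rw [hinddef]; simp [this, h0]
      · have : e ∈ B := by
          rw [hBdef]; exact Finset.mem_filter.mpr ⟨he, h1⟩
        rw [hinddef]; simp [this, h1]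
    have hBfeas : feasible (ind B) := by
      constructor
      · intro e _; exact hind01 B e
      · intro p q r hpq hqr hpr
        rw [heq _ (pair_mem_pairs hpq), heq _ (pair_mem_pairs hqr),
          heq _ (pair_mem_pairs hpr)]
        exact hy.2 p q r hpq hqr hpr
    have hBmem : B ∈ ((pairs V).powerset).filter fun A => feasible (ind A) :=
      Finset.mem_filter.mpr
        ⟨Finset.mem_powerset.mpr (Finset.filter_subset _ _), hBfeas⟩
    calc obj c (ind A0) ≤ obj c (ind B) := hmin B hBmem
      _ = obj c y := obj_congr heq
  -- case split on the value at {i,k}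
  rcases hA0feas.1 {i, k} (pair_mem_pairs hik) with h0|h1
  · obtain ⟨x', hx'feas, hx'le, hx'ik⟩ :=
      key_step c (ind A0) i j k hij hik hjk h2 h6 h7 hA0feas h0
    exact ⟨x', hx'feas, fun y hy => le_trans hx'le (hopt y hy), hx'ik⟩
  · exact ⟨ind A0, hA0feas, hopt, h1⟩
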